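/- Let G = ℝⁿ with Lebesgue measure, and let E ⊂ ℝⁿ be measurable. Fix x ∈ ℝⁿ. Suppose E has a blowup F at x along a sequence r_j ↓ 0, i.e., the indicators of x + (E−x)/r_j converge in L¹_loc to the indicator of F. If x belongs to the strong measure-theoretic boundary of E (meaning 0 < liminf_{r→0} |B_r(x) ∩ E|/|B_r(x)| and limsup_{r→0} |B_r(x) ∩ E|/|B_r(x)| < 1), then x belongs to the strong measure-theoretic boundary of F. -/

import Mathlib

/-!
Rescaling by `r` about `x` multiplies the volumes of `B_{rρ}(x) ∩ E` and `B_{rρ}(x)` by the same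
factor, so the density of `E` in `B_{r_j ρ}(x)` equals the density of the `j`-th blowup set in
`B_ρ(x)`, which tends to the density of `F` in `B_ρ(x)` by the `L¹_loc` convergence. Since
`r_j ρ → 0⁺`, every density of `F` lies between the lower and upper densities of `E` at `x`.
-/

open Filter MeasureTheory

/-- The density ratio of a set `E` in the ball `B_ρ(x)`. -/
noncomputable def densityRatio {n : ℕ} (E : Set (EuclideanSpace ℝ (Fin n)))
    (x : EuclideanSpace ℝ (Fin n)) (ρ : ℝ) : ℝ :=
  (volume (Metric.ball x ρ ∩ E)).toReal / (volume (Metric.ball x ρ)).toReal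

/-- `x` belongs to the strong measure-theoretic boundary of `E`. -/
def StrongMTBoundary {n : ℕ} (E : Set (EuclideanSpace ℝ (Fin n)))
    (x : EuclideanSpace ℝ (Fin n)) : Prop :=
  0 < liminf (fun ρ => densityRatio E x ρ) (nhdsWithin 0 (Set.Ioi 0)) ∧
    limsup (fun ρ => densityRatio E x ρ) (nhdsWithin 0 (Set.Ioi 0)) < 1

open Metric Topology

section Homothety

variable {V : Type*} [NormedAddCommGroup V] [NormedSpace ℝ V]

theorem preimage_homothety_ball (x : V) {r : ℝ} (hr : 0 < r) (ρ : ℝ) :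
    {y | x + r • (y - x) ∈ ball x (r * ρ)} = ball x ρ := by
  ext y
  simp only [Set.mem_ofPred_eq, mem_ball, dist_eq_norm, add_sub_cancel_left, norm_smul,
    Real.norm_eq_abs, abs_of_pos hr]
  exact mul_lt_mul_iff_right₀ hr

variable [MeasurableSpace V] [BorelSpace V] [FiniteDimensional ℝ V] (μ : Measure V)
  [μ.IsAddHaarMeasure]

theorem addHaar_preimage_homothety (x : V) {r : ℝ} (hr : r ≠ 0) (s : Set V) :
    μ {y | x + r • (y - x) ∈ s} = ENNReal.ofReal |(r ^ Module.finrank ℝ V)⁻¹| * μ s := by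
  have : {y | x + r • (y - x) ∈ s} = AffineMap.homothety x r⁻¹ '' s := by
    ext y
    simp only [Set.mem_ofPred_eq, Set.mem_image, AffineMap.homothety_apply, vsub_eq_sub,
      vadd_eq_add]
    constructor
    · intro hy
      exact ⟨_, hy, by rw [add_sub_cancel_left, inv_smul_smul₀ hr, sub_add_cancel]⟩
    · rintro ⟨z, hz, rfl⟩
      rwa [add_sub_cancel_right, smul_inv_smul₀ hr, add_sub_cancel]
  rw [this, Measure.addHaar_image_homothety, inv_pow]

end Homothety

section IndicatorL1

variable {α ι : Type*} [MeasurableSpace α] {μ : Measure α} {s t A B : Set α}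

theorem abs_measureReal_inter_sub_le_integral (hst : s ⊆ t) (ht : μ t ≠ ⊤)
    (hA : MeasurableSet A) (hB : MeasurableSet B) :
    |μ.real (s ∩ A) - μ.real (s ∩ B)|
      ≤ ∫ y in t, |A.indicator (fun _ => (1 : ℝ)) y - B.indicator (fun _ => (1 : ℝ)) y| ∂μ := by
  have hint : ∀ {C : Set α}, MeasurableSet C → ∀ {u : Set α}, μ u ≠ ⊤ →
      IntegrableOn (C.indicator fun _ => (1 : ℝ)) u μ := fun hC _ hu =>
    (integrableOn_const hu).indicator hC
  have hs : μ s ≠ ⊤ := measure_ne_top_of_subset hst ht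
  calc |μ.real (s ∩ A) - μ.real (s ∩ B)|
      = |∫ y in s, (A.indicator (fun _ => (1 : ℝ)) y - B.indicator (fun _ => (1 : ℝ)) y) ∂μ| := by
        rw [integral_sub (hint hA hs) (hint hB hs), integral_indicator_const _ hA,
          integral_indicator_const _ hB, measureReal_restrict_apply hA,
          measureReal_restrict_apply hB, Set.inter_comm A, Set.inter_comm B, smul_eq_mul,
          smul_eq_mul, mul_one, mul_one]
    _ ≤ ∫ y in s, |A.indicator (fun _ => (1 : ℝ)) y - B.indicator (fun _ => (1 : ℝ)) y| ∂μ :=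
        abs_integral_le_integral_abs
    _ ≤ ∫ y in t, |A.indicator (fun _ => (1 : ℝ)) y - B.indicator (fun _ => (1 : ℝ)) y| ∂μ :=
        setIntegral_mono_set ((hint hA ht).sub (hint hB ht)).abs
          (Eventually.of_forall fun _ => abs_nonneg _) hst.eventuallyLE

theorem tendsto_measureReal_inter_of_tendsto_integral_abs_indicator_sub {A : ι → Set α}
    {l : Filter ι} (hst : s ⊆ t) (ht : μ t ≠ ⊤) (hA : ∀ i, MeasurableSet (A i))
    (hB : MeasurableSet B)
    (hAB : Tendsto (fun i => ∫ y in t,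
      |(A i).indicator (fun _ => (1 : ℝ)) y - B.indicator (fun _ => (1 : ℝ)) y| ∂μ) l (𝓝 0)) :
    Tendsto (fun i => μ.real (s ∩ A i)) l (𝓝 (μ.real (s ∩ B))) := by
  rw [tendsto_iff_dist_tendsto_zero]
  exact squeeze_zero (fun _ => dist_nonneg)
    (fun i => abs_measureReal_inter_sub_le_integral hst ht (hA i) hB) hAB

end IndicatorL1

section Density

variable {n : ℕ}

theorem densityRatio_nonneg (E : Set (EuclideanSpace ℝ (Fin n)))
    (x : EuclideanSpace ℝ (Fin n)) (ρ : ℝ) : 0 ≤ densityRatio E x ρ :=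
  div_nonneg ENNReal.toReal_nonneg ENNReal.toReal_nonneg

theorem densityRatio_le_one (E : Set (EuclideanSpace ℝ (Fin n)))
    (x : EuclideanSpace ℝ (Fin n)) (ρ : ℝ) : densityRatio E x ρ ≤ 1 :=
  div_le_one_of_le₀ (ENNReal.toReal_mono measure_ball_lt_top.ne
    (measure_mono Set.inter_subset_left)) ENNReal.toReal_nonneg

theorem densityRatio_mul (E : Set (EuclideanSpace ℝ (Fin n)))
    (x : EuclideanSpace ℝ (Fin n)) {r : ℝ} (hr : 0 < r) (ρ : ℝ) :
    densityRatio E x (r * ρ) = densityRatio {y | x + r • (y - x) ∈ E} x ρ := by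
  set c := ENNReal.ofReal |(r ^ Module.finrank ℝ (EuclideanSpace ℝ (Fin n)))⁻¹|
  have hc_ne : c.toReal ≠ 0 := by
    simp only [c, ENNReal.toReal_ofReal (abs_nonneg _), ne_eq, abs_eq_zero, inv_eq_zero]
    exact pow_ne_zero _ hr.ne'
  have hscale := addHaar_preimage_homothety volume x hr.ne'
  have hnum :
      volume (ball x ρ ∩ {y | x + r • (y - x) ∈ E}) = c * volume (ball x (r * ρ) ∩ E) := by
    rw [← preimage_homothety_ball x hr ρ]
    exact hscale (ball x (r * ρ) ∩ E)
  have hden : volume (ball x ρ) = c * volume (ball x (r * ρ)) := by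
    rw [← hscale, preimage_homothety_ball x hr ρ]
  rw [densityRatio, densityRatio, hnum, hden, ENNReal.toReal_mul, ENNReal.toReal_mul,
    mul_div_mul_left _ _ hc_ne]

theorem tendsto_densityRatio_of_tendsto_integral_abs_indicator_sub {ι : Type*} {l : Filter ι}
    {A : ι → Set (EuclideanSpace ℝ (Fin n))} {F : Set (EuclideanSpace ℝ (Fin n))}
    (hA : ∀ i, MeasurableSet (A i)) (hF : MeasurableSet F)
    (hAF : ∀ R > (0 : ℝ), Tendsto (fun i => ∫ y in ball (0 : EuclideanSpace ℝ (Fin n)) R,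
      |(A i).indicator (fun _ => (1 : ℝ)) y - F.indicator (fun _ => (1 : ℝ)) y| ∂volume) l (𝓝 0))
    (x : EuclideanSpace ℝ (Fin n)) (ρ : ℝ) :
    Tendsto (fun i => densityRatio (A i) x ρ) l (𝓝 (densityRatio F x ρ)) := by
  have hR : 0 < ‖x‖ + |ρ| + 1 := by positivity
  have hsub : ball x ρ ⊆ ball 0 (‖x‖ + |ρ| + 1) :=
    ball_subset_ball' (by rw [dist_zero_right]; linarith [le_abs_self ρ])
  exact (tendsto_measureReal_inter_of_tendsto_integral_abs_indicator_sub hsub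
    measure_ball_lt_top.ne hA hF (hAF _ hR)).div_const _

theorem densityRatio_mem_Icc_of_tendsto_comp {ι : Type*} {f : Filter ι} [f.NeBot]
    {l : Filter ℝ} {E : Set (EuclideanSpace ℝ (Fin n))} {x : EuclideanSpace ℝ (Fin n)}
    {u : ι → ℝ} {a : ℝ} (hu : Tendsto u f l)
    (ha : Tendsto (fun i => densityRatio E x (u i)) f (𝓝 a)) :
    a ∈ Set.Icc (liminf (densityRatio E x) l) (limsup (densityRatio E x) l) := by
  have hbdd_below : l.IsBoundedUnder (· ≥ ·) (densityRatio E x) :=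
    isBoundedUnder_of ⟨0, densityRatio_nonneg E x⟩
  have hbdd_above : l.IsBoundedUnder (· ≤ ·) (densityRatio E x) :=
    isBoundedUnder_of ⟨1, densityRatio_le_one E x⟩
  constructor
  · calc liminf (densityRatio E x) l
        ≤ liminf (densityRatio E x ∘ u) f :=
          hu.liminf_le_liminf_comp (isCoboundedUnder_ge_of_le _ (densityRatio_le_one E x))
            hbdd_below
      _ = a := ha.liminf_eq
  · calc a = limsup (densityRatio E x ∘ u) f := ha.limsup_eq.symm
      _ ≤ limsup (densityRatio E x) l :=
          hu.limsup_comp_le_limsup (isCoboundedUnder_le_of_le _ (densityRatio_nonneg E x))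
            hbdd_above

theorem StrongMTBoundary.of_eventually_densityRatio_mem_Icc
    {E F : Set (EuclideanSpace ℝ (Fin n))} {x : EuclideanSpace ℝ (Fin n)}
    (hE : StrongMTBoundary E x)
    (hF : ∀ᶠ ρ in 𝓝[>] 0, densityRatio F x ρ ∈
      Set.Icc (liminf (densityRatio E x) (𝓝[>] 0)) (limsup (densityRatio E x) (𝓝[>] 0))) :
    StrongMTBoundary F x :=
  ⟨hE.1.trans_le <| le_liminf_of_le (isCoboundedUnder_ge_of_le _ (densityRatio_le_one F x))
      (hF.mono fun _ h => h.1),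
    (limsup_le_of_le (isCoboundedUnder_le_of_le _ (densityRatio_nonneg F x))
      (hF.mono fun _ h => h.2)).trans_lt hE.2⟩

end Density

theorem stmt_6_general {n : ℕ} (E F : Set (EuclideanSpace ℝ (Fin n)))
    (hE : MeasurableSet E) (hF : MeasurableSet F)
    (x : EuclideanSpace ℝ (Fin n))
    (r : ℕ → ℝ) (hrpos : ∀ j, 0 < r j)
    (hr0 : Tendsto r atTop (nhds 0))
    (hconv : ∀ R > (0 : ℝ),
      Tendsto (fun j => ∫ y in Metric.ball (0 : EuclideanSpace ℝ (Fin n)) R,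
          |Set.indicator {y | x + r j • (y - x) ∈ E} (fun _ => (1 : ℝ)) y -
            Set.indicator F (fun _ => (1 : ℝ)) y| ∂volume)
        atTop (nhds 0))
    (hx : StrongMTBoundary E x) :
    StrongMTBoundary F x := by
  have hblowup_meas : ∀ j, MeasurableSet {y | x + r j • (y - x) ∈ E} := fun j =>
    (by fun_prop : Measurable fun y => x + r j • (y - x)) hE
  refine hx.of_eventually_densityRatio_mem_Icc (eventually_mem_nhdsWithin.mono fun ρ hρ => ?_)
  have hscales : Tendsto (fun j => r j * ρ) atTop (𝓝[>] 0) :=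
    tendsto_nhdsWithin_of_tendsto_nhds_of_eventually_within _
      (by simpa using hr0.mul_const ρ) (Eventually.of_forall fun j => mul_pos (hrpos j) hρ)
  refine densityRatio_mem_Icc_of_tendsto_comp hscales ?_
  simp_rw [densityRatio_mul E x (hrpos _)]
  exact tendsto_densityRatio_of_tendsto_integral_abs_indicator_sub hblowup_meas hF hconv x ρ

/-- If `F` is a blowup of `E ⊆ ℝⁿ` at `x` along scales `r_j ↓ 0` (indicators of
the rescaled sets converge in `L¹_loc` to the indicator of `F`) and `x` lies in
the strong measure-theoretic boundary of `E`, then `x` lies in the strong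
measure-theoretic boundary of `F`. -/
theorem stmt_6 {n : ℕ} (E F : Set (EuclideanSpace ℝ (Fin n)))
    (hE : MeasurableSet E) (hF : MeasurableSet F)
    (x : EuclideanSpace ℝ (Fin n))
    (r : ℕ → ℝ) (hrpos : ∀ j, 0 < r j) (hranti : StrictAnti r)
    (hr0 : Tendsto r atTop (nhds 0))
    (hconv : ∀ R > (0 : ℝ),
      Tendsto (fun j => ∫ y in Metric.ball (0 : EuclideanSpace ℝ (Fin n)) R,
          |Set.indicator {y | x + r j • (y - x) ∈ E} (fun _ => (1 : ℝ)) y -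
            Set.indicator F (fun _ => (1 : ℝ)) y| ∂volume)
        atTop (nhds 0))
    (hx : StrongMTBoundary E x) :
    StrongMTBoundary F x :=
  stmt_6_general E F hE hF x r hrpos hr0 hconv hx
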